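/- The liberal-start-respecting rule f^{LSR} is immune to group control by partitioning: for every U ⊆ N, if S ⊄ f^{LSR}(φ,N), then S ⊄ f^{LSR}(φ, f^{LSR}(φ,U) ∪ f^{LSR}(φ, N\U)). -/
import Mathlib


open Finset

variable {N : Type*} [DecidableEq N] [Fintype N]

/-- Consent rule `f^{(s,t)}`: `a ∈ T` with `φ a a = 1` is socially qualified iff at least
`s` members of `T` qualify her; `a` with `φ a a = 0` is socially qualified iff fewer than
`t` members of `T` disqualify her. -/
def consent (s t : ℕ) (φ : N → N → Bool) (T : Finset N) : Finset N :=
  T.filter (fun a =>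
    if φ a a = true then s ≤ (T.filter (fun b => φ b a = true)).card
    else (T.filter (fun b => φ b a = false)).card < t)

/-- One expansion step: add every member of `T` qualified by someone currently included. -/
def qstep (φ : N → N → Bool) (T K : Finset N) : Finset N :=
  K ∪ T.filter (fun a => ∃ b ∈ K, φ b a = true)

/-- Initial set for the liberal-start-respecting rule. -/
def K0L (φ : N → N → Bool) (T : Finset N) : Finset N :=
  T.filter (fun a => φ a a = true)

/-- Initial set for the consensus-start-respecting rule. -/
def K0C (φ : N → N → Bool) (T : Finset N) : Finset N :=
  T.filter (fun a => ∀ b ∈ T, φ b a = true)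

/-- Liberal-start-respecting rule (fixed point reached after `T.card` steps). -/
def fLSR (φ : N → N → Bool) (T : Finset N) : Finset N :=
  (qstep φ T)^[T.card] (K0L φ T)

/-- Consensus-start-respecting rule (fixed point reached after `T.card` steps). -/
def fCSR (φ : N → N → Bool) (T : Finset N) : Finset N :=
  (qstep φ T)^[T.card] (K0C φ T)

lemma qstep_mono (φ : N → N → Bool) {T T' K K' : Finset N} (hT : T ⊆ T') (hK : K ⊆ K') :
    qstep φ T K ⊆ qstep φ T' K' := by
  unfold qstep
  apply Finset.union_subset_union hK
  intro a ha
  simp only [Finset.mem_filter] at ha ⊢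
  obtain ⟨haT, b, hb, hφ⟩ := ha
  exact ⟨hT haT, b, hK hb, hφ⟩

lemma qstep_extensive (φ : N → N → Bool) (T K : Finset N) : K ⊆ qstep φ T K :=
  Finset.subset_union_left

lemma qstep_iter_extensive (φ : N → N → Bool) (T : Finset N) (n : ℕ) (K : Finset N) :
    K ⊆ (qstep φ T)^[n] K := by
  induction n with
  | zero => simp
  | succ n ih =>
    rw [Function.iterate_succ_apply']
    exact ih.trans (qstep_extensive φ T _)

lemma qstep_iter_mono (φ : N → N → Bool) {T T' K K' : Finset N} (hT : T ⊆ T') (hK : K ⊆ K')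
    (n : ℕ) : (qstep φ T)^[n] K ⊆ (qstep φ T')^[n] K' := by
  induction n with
  | zero => simpa
  | succ n ih =>
    rw [Function.iterate_succ_apply', Function.iterate_succ_apply']
    exact qstep_mono φ hT ih

lemma fLSR_mono (φ : N → N → Bool) {T T' : Finset N} (hT : T ⊆ T') :
    fLSR φ T ⊆ fLSR φ T' := by
  unfold fLSR
  have hK : K0L φ T ⊆ K0L φ T' := Finset.filter_subset_filter _ hT
  have hn : T.card ≤ T'.card := Finset.card_le_card hT
  calc (qstep φ T)^[T.card] (K0L φ T)
      ⊆ (qstep φ T')^[T.card] (K0L φ T') := qstep_iter_mono φ hT hK _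
    _ ⊆ (qstep φ T')^[T'.card - T.card] ((qstep φ T')^[T.card] (K0L φ T')) :=
        qstep_iter_extensive φ T' _ _
    _ = (qstep φ T')^[T'.card] (K0L φ T') := by
        rw [← Function.iterate_add_apply, Nat.sub_add_cancel hn]

theorem stmt11 (φ : N → N → Bool) (S : Finset N)
    (hS : ¬ S ⊆ fLSR φ Finset.univ) (U : Finset N) :
    ¬ S ⊆ fLSR φ (fLSR φ U ∪ fLSR φ (Finset.univ \ U)) := by
  intro h
  exact hS (h.trans (fLSR_mono φ (Finset.subset_univ _)))
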